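/- Let p be an odd prime, let d ≥ 1 be an integer, and let a be a unit modulo p² with a ≡ 1 (mod p). Then Σ_φ φ(a) · τ(φ)^d ≠ 0, where the sum runs over all Dirichlet characters φ modulo p². -/

import Mathlib

open scoped BigOperators

/-- `e(x) = exp(2πix)`. -/
noncomputable def e (x : ℂ) : ℂ := Complex.exp (2 * Real.pi * Complex.I * x)

/-- The hyper Kloosterman sum of dimension `d` and modulus `M` at a unit `r` mod `M`:
`Kl_d(r; M) = Σ_{n₁⋯n_d ≡ r (M)} e((n₁+⋯+n_d)/M)`. -/
noncomputable def Kl (d M : ℕ) (r : (ZMod M)ˣ) : ℂ :=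
  ∑ᶠ n : Fin d → (ZMod M)ˣ,
    if (∏ i, n i) = r then e (((∑ i, ((n i : ZMod M)).val : ℕ) : ℂ) / M) else 0

/-- Gauss sum of a Dirichlet character mod `M`: `τ(φ) = Σ_{a mod M} φ(a) e(a/M)`. -/
noncomputable def tau {M : ℕ} (φ : DirichletCharacter ℂ M) : ℂ :=
  ∑ᶠ a : ZMod M, φ a * e ((a.val : ℂ) / M)

/-!
Expanding `τ(φ)^d` and summing over `φ` by orthogonality turns the sum into `φ(p²)` times the
hyper-Kloosterman sum `Kl_d(a⁻¹; p²)`. Every unit mod `p²` is uniquely `ω(y)(1 + pk)` with `ω` the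
Teichmüller lift of `y ∈ (ℤ/p)ˣ` and `k ∈ ℤ/p`. For `r = 1 + ps`, summing over the `k`-coordinates
kills every tuple whose `y`-coordinates are not all equal, which leaves
`Kl_d(r; p²) = p^(d-1) Σ_{y^d = 1} e(d ω(y)/p²) e(ys/p)`. This is a nonempty sum of fewer than `p`
roots of unity of order `p²`, and such a sum cannot vanish: if `Σ ζ^{m_i} = 0` then
`Φ_{p²} ∣ Σ X^{m_i}`, and evaluating at `1` shows that `p` divides the number of terms.
-/

open Finset

theorem AddChar.map_sum_eq_prod {A M ι : Type*} [AddCommMonoid A] [CommMonoid M]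
    (ψ : AddChar A M) (s : Finset ι) (f : ι → A) : ψ (∑ i ∈ s, f i) = ∏ i ∈ s, ψ (f i) := by
  change ψ.toMonoidHom (Multiplicative.ofAdd (∑ i ∈ s, f i)) = _
  rw [ofAdd_sum, map_prod]
  rfl

theorem AddChar.map_zmod_pow_eq_one {N : ℕ} {M : Type*} [Monoid M] (ψ : AddChar (ZMod N) M)
    (x : ZMod N) : ψ x ^ N = 1 := by
  rw [← map_nsmul_eq_pow, nsmul_eq_mul, ZMod.natCast_self, zero_mul, map_zero_eq_one]

theorem Fintype.sum_units_eq_sum {R β : Type*} [Monoid R] [Fintype R] [DecidableEq R]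
    [AddCommMonoid β] (f : R → β) (hf : ∀ x, ¬IsUnit x → f x = 0) :
    ∑ u : Rˣ, f u = ∑ x, f x := by
  rw [← Finset.sum_subset (subset_univ ((univ : Finset Rˣ).map ⟨Units.val, Units.val_injective⟩)),
    sum_map]
  · rfl
  · intro x _ hx
    exact hf x fun hu => hx (mem_map.mpr ⟨hu.unit, mem_univ _, rfl⟩)

theorem Fin.sum_ite_forall_eq_apply_zero {T β : Type*} [Fintype T] [DecidableEq T]
    [AddCommMonoid β] {n : ℕ} (F : (Fin (n + 1) → T) → β) :
    ∑ u : Fin (n + 1) → T, (if ∀ i, u i = u 0 then F u else 0) = ∑ v, F fun _ => v := by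
  rw [← (Fin.consEquiv fun _ => T).sum_comp, Fintype.sum_prod_type]
  refine Finset.sum_congr rfl fun v _ => ?_
  have hconst (u : Fin n → T) : (∀ i, u i = v) ↔ u = fun _ => v := funext_iff.symm
  simp only [Fin.consEquiv_apply, Fin.forall_fin_succ, Fin.cons_zero, Fin.cons_succ, true_and,
    hconst, Finset.sum_ite_eq', Finset.mem_univ, if_true]
  congr 1
  funext i
  cases i using Fin.cases <;> rfl

theorem AddChar.sum_ite_sum_eq {R R' : Type*} [CommRing R] [Fintype R] [DecidableEq R]
    [CommRing R'] [IsDomain R'] {n : ℕ} {ψ : AddChar R R'} (hψ : ψ.IsPrimitive)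
    (c : Fin (n + 1) → R) (s : R) :
    ∑ k : Fin (n + 1) → R, (if ∑ i, k i = s then ψ (∑ i, c i * k i) else 0) =
      if ∀ i, c i = c 0 then (Fintype.card R : R') ^ n * ψ (c 0 * s) else 0 := by
  rw [← (Fin.consEquiv fun _ => R).sum_comp, Fintype.sum_prod_type, Finset.sum_comm]
  simp only [Fin.consEquiv_apply, Fin.sum_univ_succ, Fin.cons_zero, Fin.cons_succ]
  have hfree (k : Fin n → R) :
      ∑ x : R, (if x + ∑ i, k i = s then ψ (c 0 * x + ∑ i, c i.succ * k i) else 0) =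
        ψ (c 0 * s) * ∏ i, ψ (k i * (c i.succ - c 0)) := by
    simp_rw [← eq_sub_iff_add_eq, Finset.sum_ite_eq', Finset.mem_univ, if_true,
      ← AddChar.map_sum_eq_prod, ← AddChar.map_add_eq_mul]
    congr 1
    rw [mul_sub, Finset.mul_sum]
    simp only [mul_sub, Finset.sum_sub_distrib]
    simp only [mul_comm (k _)]
    ring
  simp_rw [hfree, ← Finset.mul_sum]
  rw [← Fintype.prod_sum (fun (i : Fin n) (t : R) => ψ (t * (c i.succ - c 0)))]
  simp only [AddChar.sum_mulShift _ hψ, Nat.cast_ite, Nat.cast_zero, Fintype.prod_ite_zero,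
    Finset.prod_const, Finset.card_univ, Fintype.card_fin, sub_eq_zero,
    Fin.forall_fin_succ (P := fun i => c i = c 0), true_and]
  split_ifs <;> ring

theorem sum_ne_zero_of_pow_prime_pow_eq_one {p : ℕ} [hp : Fact p.Prime] (k : ℕ) {ι : Type*}
    (s : Finset ι) (z : ι → ℂ) (hz : ∀ i ∈ s, z i ^ p ^ (k + 1) = 1) (hs : s.Nonempty)
    (hcard : #s < p) : ∑ i ∈ s, z i ≠ 0 := by
  have hN : 0 < p ^ (k + 1) := pow_pos hp.out.pos _
  set ζ := Complex.exp (2 * Real.pi * Complex.I / ↑(p ^ (k + 1)))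
  have hζ : IsPrimitiveRoot ζ (p ^ (k + 1)) := Complex.isPrimitiveRoot_exp _ hN.ne'
  have hpow : ∀ i, ∃ m : ℕ, i ∈ s → ζ ^ m = z i := fun i => by
    by_cases hi : i ∈ s
    · obtain ⟨m, -, hm⟩ := hζ.eq_pow_of_pow_eq_one (hz i hi)
      exact ⟨m, fun _ => hm⟩
    · exact ⟨0, fun h => (hi h).elim⟩
  choose m hm using hpow
  intro h
  set P : Polynomial ℤ := ∑ i ∈ s, Polynomial.X ^ m i
  have hP : Polynomial.aeval ζ P = 0 := by
    simpa [P, Finset.sum_congr rfl hm] using h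
  obtain ⟨Q, hQ⟩ : Polynomial.cyclotomic (p ^ (k + 1)) ℤ ∣ P := by
    rw [Polynomial.cyclotomic_eq_minpoly hζ hN]
    exact minpoly.isIntegrallyClosed_dvd (hζ.isIntegral hN) hP
  have hdvd : (p : ℤ) ∣ #s := by
    refine ⟨Q.eval 1, ?_⟩
    have := congrArg (Polynomial.eval 1) hQ
    simpa [P, Polynomial.eval_finsetSum, Polynomial.eval_one_cyclotomic_prime_pow] using this
  have := Nat.le_of_dvd hs.card_pos (Int.ofNat_dvd.mp hdvd)
  omega

section GaussSum

variable {M : ℕ} [NeZero M]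

theorem e_natCast_div (m : ℕ) : e (m / M) = ZMod.stdAddChar (m : ZMod M) := by
  rw [ZMod.stdAddChar_apply, ZMod.toCircle_natCast, e]
  ring_nf

theorem tau_eq_sum_units (φ : DirichletCharacter ℂ M) :
    tau φ = ∑ u : (ZMod M)ˣ, φ u * ZMod.stdAddChar (u : ZMod M) := by
  classical
  rw [tau, finsum_eq_sum_of_fintype, ← Fintype.sum_units_eq_sum]
  · simp_rw [e_natCast_div, ZMod.natCast_val, ZMod.cast_id', id]
  · intro x hx
    rw [φ.map_nonunit hx, zero_mul]

theorem Kl_eq_sum (d : ℕ) (r : (ZMod M)ˣ) :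
    Kl d M r = ∑ n : Fin d → (ZMod M)ˣ,
      if ∏ i, n i = r then ∏ i, ZMod.stdAddChar (n i : ZMod M) else 0 := by
  rw [Kl, finsum_eq_sum_of_fintype]
  simp_rw [e_natCast_div, Nat.cast_sum, ZMod.natCast_val, ZMod.cast_id', id,
    AddChar.map_sum_eq_prod]

theorem sum_mul_tau_pow_eq_totient_mul_Kl (d : ℕ) (a : (ZMod M)ˣ) :
    ∑ᶠ φ : DirichletCharacter ℂ M, φ a * tau φ ^ d = M.totient * Kl d M a⁻¹ := by
  classical
  simp_rw [finsum_eq_sum_of_fintype, tau_eq_sum_units, Fintype.sum_pow, Finset.mul_sum, Kl_eq_sum]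
  rw [Finset.sum_comm, Finset.mul_sum]
  refine Finset.sum_congr rfl fun n _ => ?_
  have hchar (φ : DirichletCharacter ℂ M) :
      φ a * ∏ i, φ (n i) * ZMod.stdAddChar (n i : ZMod M) =
        φ ((a * ∏ i, n i : (ZMod M)ˣ) : ZMod M) * ∏ i, ZMod.stdAddChar (n i : ZMod M) := by
    simp [Finset.prod_mul_distrib, mul_assoc]
  simp_rw [hchar, ← Finset.sum_mul, DirichletCharacter.sum_characters_eq, Units.val_eq_one,
    mul_eq_one_iff_eq_inv', ite_mul, zero_mul, mul_ite, mul_zero]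

end GaussSum

section PrimeSquare

variable {p : ℕ}

def mulPrime (p : ℕ) : ZMod p →+ ZMod (p ^ 2) :=
  ZMod.lift p ⟨(AddMonoidHom.mulLeft (p : ZMod (p ^ 2))).comp (Int.castAddHom _), by
    simp [← sq, ← Nat.cast_pow]⟩

theorem mulPrime_intCast (m : ℤ) : mulPrime p m = p * m := ZMod.lift_coe _ _ _

theorem mul_mulPrime (x : ZMod (p ^ 2)) (k : ZMod p) :
    x * mulPrime p k = mulPrime p (x.cast * k) := by
  obtain ⟨m, rfl⟩ := ZMod.intCast_surjective x
  obtain ⟨n, rfl⟩ := ZMod.intCast_surjective k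
  rw [ZMod.cast_intCast (dvd_pow_self p two_ne_zero), ← Int.cast_mul, mulPrime_intCast,
    mulPrime_intCast]
  push_cast
  ring

theorem cast_mulPrime (k : ZMod p) : ((mulPrime p k).cast : ZMod p) = 0 := by
  obtain ⟨n, rfl⟩ := ZMod.intCast_surjective k
  rw [mulPrime_intCast, ← Int.cast_natCast, ← Int.cast_mul,
    ZMod.cast_intCast (dvd_pow_self p two_ne_zero)]
  simp

theorem mulPrime_mul_self (k : ZMod p) : mulPrime p k * mulPrime p k = 0 := by
  rw [mul_mulPrime, cast_mulPrime, zero_mul, map_zero]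

theorem mulPrime_injective [hp : Fact p.Prime] : Function.Injective (mulPrime p) := by
  rw [injective_iff_map_eq_zero]
  intro k hk
  obtain ⟨n, rfl⟩ := ZMod.intCast_surjective k
  rw [mulPrime_intCast, ← Int.cast_natCast, ← Int.cast_mul, ZMod.intCast_zmod_eq_zero_iff_dvd,
    Nat.cast_pow, sq] at hk
  rw [ZMod.intCast_zmod_eq_zero_iff_dvd]
  exact (mul_dvd_mul_iff_left (by exact_mod_cast hp.out.ne_zero)).mp hk

theorem exists_mulPrime_of_cast_eq_zero {x : ZMod (p ^ 2)} (hx : (x.cast : ZMod p) = 0) :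
    ∃ k, mulPrime p k = x := by
  obtain ⟨m, rfl⟩ := ZMod.intCast_surjective x
  rw [ZMod.cast_intCast (dvd_pow_self p two_ne_zero), ZMod.intCast_zmod_eq_zero_iff_dvd] at hx
  obtain ⟨c, rfl⟩ := hx
  exact ⟨c, by rw [mulPrime_intCast]; push_cast; rfl⟩

theorem stdAddChar_mulPrime [hp : Fact p.Prime] (k : ZMod p) :
    ZMod.stdAddChar (mulPrime p k) = ZMod.stdAddChar k := by
  obtain ⟨n, rfl⟩ := ZMod.intCast_surjective k
  rw [mulPrime_intCast, ← Int.cast_natCast, ← Int.cast_mul, ZMod.stdAddChar_coe,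
    ZMod.stdAddChar_coe]
  have : (p : ℂ) ≠ 0 := Nat.cast_ne_zero.mpr hp.out.ne_zero
  congr 1
  push_cast
  field_simp

def principalUnit (p : ℕ) : AddChar (ZMod p) (ZMod (p ^ 2))ˣ where
  toFun k :=
    { val := 1 + mulPrime p k
      inv := 1 + mulPrime p (-k)
      val_inv := by rw [map_neg]; linear_combination (-1 : ZMod (p ^ 2)) * mulPrime_mul_self k
      inv_val := by rw [map_neg]; linear_combination (-1 : ZMod (p ^ 2)) * mulPrime_mul_self k }
  map_zero_eq_one' := by ext; simp
  map_add_eq_mul' k l := by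
    ext
    simp only [map_add, Units.val_mul]
    linear_combination (-1 : ZMod (p ^ 2)) * (mul_mulPrime (mulPrime p k) l).trans
      (by rw [cast_mulPrime, zero_mul, map_zero])

theorem principalUnit_val (k : ZMod p) : (principalUnit p k : ZMod (p ^ 2)) = 1 + mulPrime p k :=
  rfl

theorem principalUnit_injective [Fact p.Prime] : Function.Injective (principalUnit p) :=
  fun _ _ h => mulPrime_injective (add_left_cancel (congrArg Units.val h))

theorem unitsMap_principalUnit (k : ZMod p) :
    ZMod.unitsMap (dvd_pow_self p two_ne_zero) (principalUnit p k) = 1 := by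
  ext
  rw [ZMod.unitsMap_val, principalUnit_val, ZMod.cast_add (dvd_pow_self p two_ne_zero),
    cast_mulPrime]
  simp

theorem exists_principalUnit_of_unitsMap_eq_one {g : (ZMod (p ^ 2))ˣ}
    (hg : ZMod.unitsMap (dvd_pow_self p two_ne_zero) g = 1) : ∃ k, principalUnit p k = g := by
  have hx : ((g - 1 : ZMod (p ^ 2)).cast : ZMod p) = 0 := by
    rw [ZMod.cast_sub (dvd_pow_self p two_ne_zero),
      ← ZMod.unitsMap_val (dvd_pow_self p two_ne_zero), hg]
    simp
  obtain ⟨k, hk⟩ := exists_mulPrime_of_cast_eq_zero hx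
  exact ⟨k, Units.ext (by rw [principalUnit_val, hk, add_sub_cancel])⟩

theorem ker_unitsMap_le_ker_powMonoidHom :
    (ZMod.unitsMap (dvd_pow_self p two_ne_zero)).ker ≤ (powMonoidHom p).ker := fun g hg => by
  obtain ⟨k, rfl⟩ := exists_principalUnit_of_unitsMap_eq_one hg
  exact AddChar.map_zmod_pow_eq_one _ k

variable [Fact p.Prime]

noncomputable def teichmuller (p : ℕ) [Fact p.Prime] : (ZMod p)ˣ →* (ZMod (p ^ 2))ˣ :=
  (QuotientGroup.lift _ _ ker_unitsMap_le_ker_powMonoidHom).comp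
    (QuotientGroup.quotientKerEquivOfSurjective _
      (ZMod.unitsMap_surjective (dvd_pow_self p two_ne_zero))).symm.toMonoidHom

theorem teichmuller_unitsMap (g : (ZMod (p ^ 2))ˣ) :
    teichmuller p (ZMod.unitsMap (dvd_pow_self p two_ne_zero) g) = g ^ p := by
  have hg : (QuotientGroup.quotientKerEquivOfSurjective _
      (ZMod.unitsMap_surjective (dvd_pow_self p two_ne_zero))).symm
        (ZMod.unitsMap (dvd_pow_self p two_ne_zero) g) = g := by
    rw [MulEquiv.symm_apply_eq]
    rfl
  simp only [teichmuller, MonoidHom.comp_apply, MulEquiv.coe_toMonoidHom, hg,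
    QuotientGroup.lift_mk, powMonoidHom_apply]

theorem unitsMap_teichmuller (y : (ZMod p)ˣ) :
    ZMod.unitsMap (dvd_pow_self p two_ne_zero) (teichmuller p y) = y := by
  obtain ⟨g, rfl⟩ := ZMod.unitsMap_surjective (dvd_pow_self p two_ne_zero) y
  rw [teichmuller_unitsMap, map_pow]
  ext
  rw [Units.val_pow_eq_pow_val, ZMod.pow_card]

theorem bijective_teichmuller_mul_principalUnit :
    Function.Bijective fun x : (ZMod p)ˣ × ZMod p => teichmuller p x.1 * principalUnit p x.2 := by
  constructor
  · rintro ⟨y, k⟩ ⟨y', k'⟩ h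
    have hy : y = y' := by
      simpa [unitsMap_teichmuller, unitsMap_principalUnit] using
        congrArg (ZMod.unitsMap (dvd_pow_self p two_ne_zero)) h
    subst hy
    exact Prod.ext rfl (principalUnit_injective (mul_left_cancel h))
  · intro g
    obtain ⟨k, hk⟩ := exists_principalUnit_of_unitsMap_eq_one (p := p)
      (g := (teichmuller p (ZMod.unitsMap (dvd_pow_self p two_ne_zero) g))⁻¹ * g)
      (by rw [map_mul, map_inv, unitsMap_teichmuller, inv_mul_cancel])
    exact ⟨(_, k), show _ * _ = g by rw [hk, mul_inv_cancel_left]⟩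

noncomputable def unitsEquiv (p : ℕ) [Fact p.Prime] : (ZMod p)ˣ × ZMod p ≃ (ZMod (p ^ 2))ˣ :=
  Equiv.ofBijective _ bijective_teichmuller_mul_principalUnit

theorem unitsEquiv_apply (y : (ZMod p)ˣ) (k : ZMod p) :
    unitsEquiv p (y, k) = teichmuller p y * principalUnit p k := rfl

theorem prod_unitsEquiv {ι : Type*} (s : Finset ι) (y : ι → (ZMod p)ˣ) (k : ι → ZMod p) :
    ∏ i ∈ s, unitsEquiv p (y i, k i) = unitsEquiv p (∏ i ∈ s, y i, ∑ i ∈ s, k i) := by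
  simp only [unitsEquiv_apply, Finset.prod_mul_distrib, map_prod, AddChar.map_sum_eq_prod]

theorem stdAddChar_unitsEquiv (y : (ZMod p)ˣ) (k : ZMod p) :
    ZMod.stdAddChar (unitsEquiv p (y, k) : ZMod (p ^ 2)) =
      ZMod.stdAddChar (teichmuller p y : ZMod (p ^ 2)) * ZMod.stdAddChar ((y : ZMod p) * k) := by
  rw [unitsEquiv_apply, Units.val_mul, principalUnit_val, mul_add, mul_one, mul_mulPrime,
    AddChar.map_add_eq_mul, stdAddChar_mulPrime, ← ZMod.unitsMap_val (dvd_pow_self p two_ne_zero),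
    unitsMap_teichmuller]

end PrimeSquare

section Kloosterman

variable {p : ℕ} [Fact p.Prime]

theorem Kl_prime_sq_principalUnit (d : ℕ) (s : ZMod p) :
    Kl (d + 1) (p ^ 2) (principalUnit p s) =
      p ^ d * ∑ y : (ZMod p)ˣ with y ^ (d + 1) = 1,
        ZMod.stdAddChar (teichmuller p y : ZMod (p ^ 2)) ^ (d + 1) *
          ZMod.stdAddChar ((y : ZMod p) * s) := by
  classical
  let E : (Fin (d + 1) → (ZMod p)ˣ) × (Fin (d + 1) → ZMod p) ≃ (Fin (d + 1) → (ZMod (p ^ 2))ˣ) :=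
    (Equiv.arrowProdEquivProdArrow _ _ _).symm.trans (Equiv.piCongrRight fun _ => unitsEquiv p)
  rw [Kl_eq_sum, ← E.sum_comp, Fintype.sum_prod_type]
  have hcond (y : Fin (d + 1) → (ZMod p)ˣ) (k : Fin (d + 1) → ZMod p) :
      unitsEquiv p (∏ i, y i, ∑ i, k i) = principalUnit p s ↔ ∏ i, y i = 1 ∧ ∑ i, k i = s := by
    rw [show principalUnit p s = unitsEquiv p (1, s) by rw [unitsEquiv_apply, map_one, one_mul],
      (unitsEquiv p).injective.eq_iff, Prod.mk.injEq]
  have hE (y k) (i : Fin (d + 1)) : E (y, k) i = unitsEquiv p (y i, k i) := rfl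
  simp only [hE, prod_unitsEquiv, hcond, stdAddChar_unitsEquiv, Finset.prod_mul_distrib,
    ← AddChar.map_sum_eq_prod, ← ite_zero_mul_ite_zero, ← Finset.mul_sum,
    (ZMod.stdAddChar (N := p)).sum_ite_sum_eq (ZMod.isPrimitive_stdAddChar p), Units.val_inj]
  rw [Finset.mul_sum, Finset.sum_filter]
  simp only [mul_ite, mul_zero, Fin.sum_ite_forall_eq_apply_zero, Finset.prod_const,
    Finset.card_univ, Fintype.card_fin, Finset.sum_const, ZMod.card, AddChar.map_nsmul_eq_pow]
  refine Finset.sum_congr rfl fun y _ => ?_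
  split_ifs <;> ring

theorem Kl_prime_sq_ne_zero (d : ℕ) {r : (ZMod (p ^ 2))ˣ}
    (hr : ZMod.unitsMap (dvd_pow_self p two_ne_zero) r = 1) : Kl (d + 1) (p ^ 2) r ≠ 0 := by
  obtain ⟨s, rfl⟩ := exists_principalUnit_of_unitsMap_eq_one hr
  rw [Kl_prime_sq_principalUnit]
  refine mul_ne_zero (pow_ne_zero _ (Nat.cast_ne_zero.mpr (Fact.out : p.Prime).ne_zero))
    (sum_ne_zero_of_pow_prime_pow_eq_one (p := p) 1 _ _ (fun y _ => ?_) ⟨1, by simp⟩ ?_)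
  · show _ ^ p ^ 2 = 1
    rw [mul_pow, ← pow_mul, mul_comm (d + 1), pow_mul, AddChar.map_zmod_pow_eq_one, one_pow,
      one_mul, sq, pow_mul, AddChar.map_zmod_pow_eq_one, one_pow]
  · calc #_ ≤ Fintype.card (ZMod p)ˣ := Finset.card_le_univ _
      _ < p := by rw [ZMod.card_units]; exact Nat.sub_lt (Fact.out : p.Prime).pos one_pos

end Kloosterman

theorem stmt5 (p : ℕ) [Fact p.Prime] (d : ℕ) (hd : 1 ≤ d)
    (a : (ZMod (p ^ 2))ˣ)
    (ha : ZMod.castHom (dvd_pow_self p (by norm_num : (2 : ℕ) ≠ 0)) (ZMod p)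
        (a : ZMod (p ^ 2)) = 1) :
    (∑ᶠ φ : DirichletCharacter ℂ (p ^ 2), φ (a : ZMod (p ^ 2)) * tau φ ^ d) ≠ 0 := by
  obtain ⟨d, rfl⟩ := Nat.exists_eq_add_of_le' hd
  have ha' : ZMod.unitsMap (dvd_pow_self p two_ne_zero) a⁻¹ = 1 := by
    rw [map_inv, inv_eq_one]
    exact Units.ext ha
  have htotient : ((p ^ 2).totient : ℂ) ≠ 0 :=
    Nat.cast_ne_zero.mpr (Nat.totient_pos.mpr (pow_pos (Fact.out : p.Prime).pos 2)).ne'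
  rw [sum_mul_tau_pow_eq_totient_mul_Kl]
  exact mul_ne_zero htotient (Kl_prime_sq_ne_zero d ha')
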